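/- Every pure generalized satisfaction equilibrium of a finite satisfaction game, viewed as a Dirac (point-mass) distribution on the profile space, is a correlated equilibrium of the natural normal form game with binary utilities. -/
import Mathlib


open Classical

noncomputable section

/-- The restriction of a full action profile to the opponents of player `i`. -/
def coProfile {ι : Type} {A : ι → Type} (i : ι) (a : ∀ j, A j) : ∀ j, j ≠ i → A j :=
  fun j _ => a j

theorem pure_GSE_dirac_is_CE
    {ι : Type} [Fintype ι] [DecidableEq ι] {A : ι → Type}
    [∀ i, Fintype (A i)] [∀ i, Nonempty (A i)]
    (f : ∀ i : ι, (∀ j : ι, j ≠ i → A j) → Set (A i))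
    (u : ∀ i : ι, (∀ j, A j) → ℝ)
    (hu : ∀ i a, u i a = if a i ∈ f i (coProfile i a) then (1 : ℝ) else 0)
    (a : ∀ j, A j)
    (hGSE : ∀ i, a i ∈ f i (coProfile i a) ∨ f i (coProfile i a) = ∅)
    (π : (∀ j, A j) → ℝ)
    (hπ : ∀ b, π b = if b = a then (1 : ℝ) else 0) :
    ∀ (i : ι) (ai ai' : A i),
      ∑ b ∈ Finset.univ.filter (fun b : ∀ j, A j => b i = ai),
        π b * (u i (Function.update b i ai') - u i b) ≤ 0 := by
  intro i ai ai'
  apply Finset.sum_nonpos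
  intro b _
  by_cases hb : b = a
  · subst hb
    rw [hπ, if_pos rfl, one_mul, sub_nonpos]
    have hco : coProfile i (Function.update b i ai') = coProfile i b := by
      funext j hj
      simp [coProfile, Function.update_of_ne hj]
    rcases hGSE i with h | h
    · rw [hu i b, if_pos h, hu, hco]
      split <;> norm_num
    · rw [hu i b, hu, hco, h]
      simp
  · rw [hπ, if_neg hb, zero_mul]
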